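/- Existence and uniqueness of minimal Hilbert decompositions (Proposition 5.2). Let M : R^n → vec be a finitely presentable persistence module. Then the function Hil(M) admits a minimal Hilbert decomposition (P*, Q*); moreover, for every other minimal Hilbert decomposition (P, Q) of Hil(M), one has P ≅ P* and Q ≅ Q*. -/

import Mathlib

set_option linter.unusedVariables false
set_option maxHeartbeats 800000

open scoped Classical ENNReal

noncomputable section

/-- Points of `R^n`. The metric on `Fin n → ℝ` is the sup-metric, so `dist` is `‖·‖_∞`. -/
abbrev Pt (n : ℕ) := Fin n → ℝ

/-- An `n`-parameter persistence module: a functor from the poset `R^n`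
to finite-dimensional `k`-vector spaces. -/
structure PersMod (k : Type) [Field k] (n : ℕ) where
  X : Pt n → Type
  [acg : ∀ r, AddCommGroup (X r)]
  [mod : ∀ r, Module k (X r)]
  [fd : ∀ r, FiniteDimensional k (X r)]
  map : ∀ {r s : Pt n}, r ≤ s → (X r →ₗ[k] X s)
  map_id : ∀ r : Pt n, map (le_refl r) = LinearMap.id
  map_comp : ∀ {r s t : Pt n} (h₁ : r ≤ s) (h₂ : s ≤ t),
    (map h₂).comp (map h₁) = map (h₁.trans h₂)

attribute [instance] PersMod.acg PersMod.mod PersMod.fd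

variable {k : Type} [Field k] {n : ℕ}

/-- A morphism of persistence modules: a natural transformation. -/
structure PersHom (M N : PersMod k n) where
  app : ∀ r, M.X r →ₗ[k] N.X r
  natural : ∀ {r s : Pt n} (h : r ≤ s),
    (N.map h).comp (app r) = (app s).comp (M.map h)

def shiftPt (ε : ℝ) (r : Pt n) : Pt n := fun i => r i + ε

lemma shiftPt_mono {ε : ℝ} {r s : Pt n} (h : r ≤ s) : shiftPt ε r ≤ shiftPt ε s :=
  fun i => add_le_add (h i) (le_refl ε)

lemma le_shiftPt {ε : ℝ} (hε : 0 ≤ ε) (r : Pt n) : r ≤ shiftPt ε r :=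
  fun i => le_add_of_nonneg_right hε

/-- The `ε`-shift of a persistence module. -/
def PersMod.shift (M : PersMod k n) (ε : ℝ) : PersMod k n where
  X r := M.X (shiftPt ε r)
  map h := M.map (shiftPt_mono h)
  map_id r := M.map_id _
  map_comp h₁ h₂ := M.map_comp _ _

/-- `M` and `N` are `ε`-interleaved. -/
def Interleaved (ε : ℝ) (M N : PersMod k n) : Prop :=
  ∃ hε : 0 ≤ ε,
  ∃ (f : PersHom M (N.shift ε)) (g : PersHom N (M.shift ε)),
    (∀ r : Pt n, (g.app (shiftPt ε r)).comp (f.app r)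
        = M.map ((le_shiftPt hε r).trans (le_shiftPt hε _))) ∧
    (∀ r : Pt n, (f.app (shiftPt ε r)).comp (g.app r)
        = N.map ((le_shiftPt hε r).trans (le_shiftPt hε _)))

/-- The interleaving distance. -/
def interleavingDist (M N : PersMod k n) : ℝ≥0∞ :=
  sInf { e : ℝ≥0∞ | ∃ ε : ℝ, e = ENNReal.ofReal ε ∧ Interleaved ε M N }

/-- The free persistence module `⊕_i F_{L i}`, where `F_j` is the "upset" interval module
generated at `j`. -/
def freeModFin {m : ℕ} (L : Fin m → Pt n) : PersMod k n where
  X r := {i : Fin m // L i ≤ r} → k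
  map {r s} h :=
    { toFun := fun f i => if h' : L i.1 ≤ r then f ⟨i.1, h'⟩ else 0
      map_add' := by
        intro f g; funext i
        by_cases h' : L i.1 ≤ r <;> simp [h']
      map_smul' := by
        intro c f; funext i
        by_cases h' : L i.1 ≤ r <;> simp [h'] }
  map_id r := by
    apply LinearMap.ext; intro f; funext i
    show (if h' : L i.1 ≤ r then f ⟨i.1, h'⟩ else 0) = f i
    rw [dif_pos i.2]
  map_comp {r s t} h₁ h₂ := by
    apply LinearMap.ext; intro f; funext i
    show (if hs : L i.1 ≤ s then
            (if hr : L i.1 ≤ r then f ⟨i.1, hr⟩ else 0) else 0)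
        = (if hr : L i.1 ≤ r then f ⟨i.1, hr⟩ else 0)
    by_cases hr : L i.1 ≤ r
    · simp [hr, hr.trans h₁]
    · simp [hr]

/-- Isomorphism of persistence modules. -/
def PersIso (M N : PersMod k n) : Prop :=
  ∃ (f : PersHom M N) (g : PersHom N M),
    (∀ r, (g.app r).comp (f.app r) = LinearMap.id) ∧
    (∀ r, (f.app r).comp (g.app r) = LinearMap.id)

/-- `P` is free of finite rank with barcode `B`. -/
def IsFreeWith (P : PersMod k n) (B : Multiset (Pt n)) : Prop :=
  ∃ (m : ℕ) (L : Fin m → Pt n), B = (List.ofFn L : Multiset (Pt n)) ∧ PersIso P (freeModFin L)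

/-- `M` is finitely presentable: it is (isomorphic to) the cokernel of a morphism
between free modules of finite rank. -/
def FinitelyPresentable (M : PersMod k n) : Prop :=
  ∃ (c r : ℕ) (Lc : Fin c → Pt n) (Lr : Fin r → Pt n)
    (f : PersHom (freeModFin Lc) (freeModFin Lr)) (g : PersHom (freeModFin Lr) M),
    (∀ x, Function.Surjective (g.app x)) ∧
    (∀ x, LinearMap.range (f.app x) = LinearMap.ker (g.app x))

/-- A resolution of `M` of length `len`:
an exact sequence `0 → P_len → ⋯ → P_0 → M → 0` (encoded with `P j = 0` for `j > len`). -/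
structure Res (M : PersMod k n) where
  len : ℕ
  P : ℕ → PersMod k n
  d : ∀ j : ℕ, PersHom (P (j + 1)) (P j)
  aug : PersHom (P 0) M
  aug_surj : ∀ r, Function.Surjective (aug.app r)
  exact_zero : ∀ r, LinearMap.range ((d 0).app r) = LinearMap.ker (aug.app r)
  exact_succ : ∀ (j : ℕ) (r), LinearMap.range ((d (j + 1)).app r) = LinearMap.ker ((d j).app r)
  vanish : ∀ j, len < j → ∀ r, ∀ x : (P j).X r, x = 0

/-- Projectivity in the category of persistence modules
(where epimorphisms are the pointwise surjections). -/
def IsProjectiveMod (P : PersMod k n) : Prop :=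
  ∀ (A B : PersMod k n) (e : PersHom A B), (∀ r, Function.Surjective (e.app r)) →
    ∀ f : PersHom P B, ∃ g : PersHom P A, ∀ r, (e.app r).comp (g.app r) = f.app r

/-- An `ε`-bijection between two multisets of points of `R^n`. -/
def IsMatching (ε : ℝ) (B C : Multiset (Pt n)) : Prop :=
  ∃ m : Multiset (Pt n × Pt n),
    m.map Prod.fst = B ∧ m.map Prod.snd = C ∧ ∀ p ∈ m, dist p.1 p.2 ≤ ε

/-- The bottleneck distance between barcodes. -/
def bottleneckDist (B C : Multiset (Pt n)) : ℝ≥0∞ :=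
  sInf { e : ℝ≥0∞ | ∃ ε : ℝ, 0 ≤ ε ∧ e = ENNReal.ofReal ε ∧ IsMatching ε B C }

/-- A signed barcode: a pair (positive part, negative part) of barcodes. -/
abbrev SignedBarcode (n : ℕ) := Multiset (Pt n) × Multiset (Pt n)

/-- The bottleneck dissimilarity on signed barcodes. -/
def dBhat (B C : SignedBarcode n) : ℝ≥0∞ :=
  bottleneckDist (B.1 + C.2) (C.1 + B.2)

/-- Binary direct sum of persistence modules. -/
def PersMod.dsum (M N : PersMod k n) : PersMod k n where
  X r := M.X r × N.X r
  map h := (M.map h).prodMap (N.map h)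
  map_id r := by
    apply LinearMap.ext; intro x
    show (M.map (le_refl r) x.1, N.map (le_refl r) x.2) = x
    rw [M.map_id, N.map_id]; rfl
  map_comp {r s t} h₁ h₂ := by
    apply LinearMap.ext; intro x
    show (M.map h₂ (M.map h₁ x.1), N.map h₂ (N.map h₁ x.2))
        = (M.map (h₁.trans h₂) x.1, N.map (h₁.trans h₂) x.2)
    rw [← M.map_comp h₁ h₂, ← N.map_comp h₁ h₂]; rfl

/-- Finite direct sum of persistence modules. -/
def dsumFin {m : ℕ} (P : Fin m → PersMod k n) : PersMod k n where
  X r := ∀ j, (P j).X r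
  map h := LinearMap.pi fun j => ((P j).map h).comp (LinearMap.proj j)
  map_id r := by
    apply LinearMap.ext; intro x; funext j
    show (P j).map (le_refl r) (x j) = x j
    rw [(P j).map_id]; rfl
  map_comp {r s t} h₁ h₂ := by
    apply LinearMap.ext; intro x; funext j
    show (P j).map h₂ ((P j).map h₁ (x j)) = (P j).map (h₁.trans h₂) (x j)
    rw [← (P j).map_comp h₁ h₂]; rfl

/-- The zero persistence module. -/
def zeroMod : PersMod k n := freeModFin (fun i : Fin 0 => i.elim0)

/-- The Hilbert function of a persistence module. -/
def Hil (M : PersMod k n) (r : Pt n) : ℕ := Module.finrank k (M.X r)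

/-- Number of points of `B` (with multiplicity) that are `≤ r`. -/
def countLe (B : Multiset (Pt n)) (r : Pt n) : ℕ := Multiset.card (B.filter (fun i => i ≤ r))

/-- `R` is a free resolution of `M` with barcodes `B j`. -/
def IsFreeRes {M : PersMod k n} (R : Res M) (B : ℕ → Multiset (Pt n)) : Prop :=
  ∀ j, IsFreeWith (R.P j) (B j)

/-- `R` is a minimal free resolution of `M` with barcodes `B j`: in every homological degree
its term has minimal rank among all free resolutions of `M`. -/
def IsMinFreeRes {M : PersMod k n} (R : Res M) (B : ℕ → Multiset (Pt n)) : Prop :=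
  IsFreeRes R B ∧
  ∀ (R' : Res M) (B' : ℕ → Multiset (Pt n)), IsFreeRes R' B' →
    ∀ j, Multiset.card (B j) ≤ Multiset.card (B' j)

/-- Multiset union of the `B j` over even `j ≤ ℓ`. -/
def evenPart (B : ℕ → Multiset (Pt n)) (ℓ : ℕ) : Multiset (Pt n) :=
  ∑ j ∈ Finset.range (ℓ + 1), if Even j then B j else 0

/-- Multiset union of the `B j` over odd `j ≤ ℓ`. -/
def oddPart (B : ℕ → Multiset (Pt n)) (ℓ : ℕ) : Multiset (Pt n) :=
  ∑ j ∈ Finset.range (ℓ + 1), if ¬ Even j then B j else 0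

/-- `S` is the Betti signed barcode of `M`: the pair (even Betti numbers, odd Betti numbers)
coming from a minimal free resolution of `M`. -/
def IsBettiOf (M : PersMod k n) (S : SignedBarcode n) : Prop :=
  ∃ (R : Res M) (B : ℕ → Multiset (Pt n)), IsMinFreeRes R B ∧
    S = (evenPart B R.len, oddPart B R.len)

/-- `(P, Q)` (with barcodes `BP`, `BQ`) is a minimal Hilbert decomposition of `η`. -/
def IsMinHilbDecomp (η : Pt n → ℤ) (P Q : PersMod k n) (BP BQ : Multiset (Pt n)) : Prop :=
  IsFreeWith P BP ∧ IsFreeWith Q BQ ∧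
  (∀ r, η r = (Hil P r : ℤ) - (Hil Q r : ℤ)) ∧
  ∀ x : Pt n, ¬ (x ∈ BP ∧ x ∈ BQ)

/-- The `ℓ¹`-distance on `R^n`. -/
def l1dist (x y : Pt n) : ℝ := ∑ i, |x i - y i|

/-- The 1-Wasserstein cost of a matching (encoded as a multiset of pairs). -/
def matchCost (m : Multiset (Pt n × Pt n)) : ℝ := (m.map fun p => l1dist p.1 p.2).sum

/-- The 1-Wasserstein distance between barcodes. -/
def wassDist (B C : Multiset (Pt n)) : ℝ≥0∞ :=
  sInf { e : ℝ≥0∞ | ∃ m : Multiset (Pt n × Pt n),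
    m.map Prod.fst = B ∧ m.map Prod.snd = C ∧ e = ENNReal.ofReal (matchCost m) }

/-- The signed 1-Wasserstein distance on signed barcodes. -/
def dW1hat (B C : SignedBarcode n) : ℝ≥0∞ := wassDist (B.1 + C.2) (C.1 + B.2)

/-- The reduction of a signed barcode: cancel common points with multiplicity. -/
def reduceSB (B : SignedBarcode n) : SignedBarcode n := (B.1 - B.2, B.2 - B.1)

/-!
Take a presentation `⊕ F_{Lc i} --f--> ⊕ F_{Ld j} --> M --> 0`. By rank–nullity,
`dim M(x) = #{j | Ld j ≤ x} - rank f_x`. In the standard bases the matrix of `f_x` is the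
submatrix of one fixed `k`-matrix (the matrix of `f`) on the columns `S_x = {i | Lc i ≤ x}`,
so `rank f_x = F (S_x)` for a fixed function `F` on subsets of the column indices. Möbius
inversion on the subset lattice writes `F S = ∑_{T ⊆ S} μ T`, and `T ⊆ S_x` iff `sup T ≤ x`;
hence `Hil M` is an integer combination of indicators of upsets `{x | p ≤ x}`, i.e. it equals
`countLe B - countLe C` for finite multisets `B`, `C`. Cancelling the common points of `B` and `C`
gives a minimal Hilbert decomposition.

For uniqueness, `countLe` determines a multiset: if `B` and `C` are disjoint with
`countLe B = countLe C`, a minimal point of `B + C` is counted on one side only. Two minimal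
decompositions `(BP, BQ)`, `(BP', BQ')` thus satisfy `BP + BQ' = BP' + BQ`, and disjointness forces
`BP = BP'` and `BQ = BQ'`; free modules with equal barcodes are isomorphic.
-/

open Finset in
lemma exists_sum_Iic_eq {𝕜 α : Type*} [Ring 𝕜] [PartialOrder α] [OrderBot α]
    [LocallyFiniteOrder α] [DecidableEq α] (g : α → 𝕜) :
    ∃ f : α → 𝕜, ∀ x, ∑ y ∈ Iic x, f y = g x := by
  refine ⟨fun y => ∑ z ∈ Iic y, IncidenceAlgebra.mu 𝕜 z y * g z, fun x => ?_⟩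
  rw [sum_comm' (t' := Iic x) (s' := fun z => Icc z x)]
  · simp_rw [← sum_mul, IncidenceAlgebra.sum_Icc_mu_right]
    simp
  · intro y z
    simp only [mem_Iic, mem_Icc]
    exact ⟨fun ⟨hyx, hzy⟩ => ⟨⟨hzy, hyx⟩, hzy.trans hyx⟩, fun ⟨⟨hzy, hyx⟩, _⟩ => ⟨hyx, hzy⟩⟩

lemma card_fiber_eq_count_ofFn {α : Type*} [DecidableEq α] {m : ℕ} (L : Fin m → α) (a : α) :
    Nat.card {i // L i = a} = (List.ofFn L : Multiset α).count a := by
  rw [← Fin.univ_val_map, Multiset.count_map, Nat.card_eq_fintype_card, Fintype.card_subtype]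
  simp_rw [eq_comm (a := a)]
  rfl

lemma exists_equiv_comp_eq_of_ofFn_eq {α : Type*} {m m' : ℕ} {L : Fin m → α} {L' : Fin m' → α}
    (h : (List.ofFn L : Multiset α) = List.ofFn L') : ∃ σ : Fin m ≃ Fin m', L' ∘ σ = L := by
  classical
  have hcard a : Nat.card {i // L i = a} = Nat.card {i // L' i = a} := by
    rw [card_fiber_eq_count_ofFn, card_fiber_eq_count_ofFn, h]
  exact ⟨Equiv.ofFiberEquiv fun a => (Finite.card_eq.mp (hcard a)).some,
    funext (Equiv.ofFiberEquiv_map _)⟩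

lemma Multiset.eq_and_eq_of_add_eq_add_of_disjoint {α : Type*} {P Q P' Q' : Multiset α}
    (hPQ : Disjoint P Q) (hPQ' : Disjoint P' Q') (h : P + Q' = P' + Q) : P = P' ∧ Q = Q' := by
  classical
  simp only [Multiset.ext, ← forall_and]
  intro x
  have hx := congrArg (Multiset.count x) h
  have hd := congrArg (Multiset.count x) (Multiset.inter_eq_zero_iff_disjoint.mpr hPQ)
  have hd' := congrArg (Multiset.count x) (Multiset.inter_eq_zero_iff_disjoint.mpr hPQ')
  simp only [Multiset.count_add, Multiset.count_inter, Multiset.count_zero] at hx hd hd'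
  omega

lemma Multiset.disjoint_sub_sub {α : Type*} [DecidableEq α] (B C : Multiset α) :
    Disjoint (B - C) (C - B) := by
  refine Multiset.disjoint_left.mpr fun {x} hB hC => ?_
  rw [← Multiset.count_pos, Multiset.count_sub] at hB hC
  omega

namespace PersHom

variable {A B C : PersMod k n}

def comp (g : PersHom B C) (f : PersHom A B) : PersHom A C where
  app r := g.app r ∘ₗ f.app r
  natural h := by
    rw [← LinearMap.comp_assoc, g.natural, LinearMap.comp_assoc, f.natural, LinearMap.comp_assoc]

end PersHom

namespace PersIso

variable {L M N : PersMod k n}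

lemma refl (M : PersMod k n) : PersIso M M :=
  ⟨⟨fun _ => LinearMap.id, fun _ => rfl⟩, ⟨fun _ => LinearMap.id, fun _ => rfl⟩,
    fun _ => rfl, fun _ => rfl⟩

lemma symm (h : PersIso M N) : PersIso N M :=
  let ⟨f, g, hgf, hfg⟩ := h
  ⟨g, f, hfg, hgf⟩

lemma trans (h : PersIso L M) (h' : PersIso M N) : PersIso L N := by
  obtain ⟨f, g, hgf, hfg⟩ := h
  obtain ⟨f', g', hgf', hfg'⟩ := h'
  refine ⟨f'.comp f, g.comp g', fun r => ?_, fun r => ?_⟩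
  · simp only [PersHom.comp, LinearMap.comp_assoc, ← LinearMap.comp_assoc (f.app r), hgf',
      LinearMap.id_comp, hgf]
  · simp only [PersHom.comp, LinearMap.comp_assoc, ← LinearMap.comp_assoc (g'.app r), hfg,
      LinearMap.id_comp, hfg']

lemma of_linearEquiv (e : ∀ r, M.X r ≃ₗ[k] N.X r)
    (he : ∀ {r s} (h : r ≤ s), N.map h ∘ₗ (e r).toLinearMap = (e s).toLinearMap ∘ₗ M.map h) :
    PersIso M N := by
  refine ⟨⟨fun r => e r, he⟩, ⟨fun r => (e r).symm, fun {r s} h => ?_⟩,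
    fun r => LinearMap.ext (e r).symm_apply_apply, fun r => LinearMap.ext (e r).apply_symm_apply⟩
  ext x
  apply (e s).injective
  simpa using (LinearMap.congr_fun (he h) ((e r).symm x)).symm

lemma hil_eq (h : PersIso M N) (r : Pt n) : Hil M r = Hil N r := by
  obtain ⟨f, g, hgf, hfg⟩ := h
  exact (LinearEquiv.ofLinearMap (f.app r) (g.app r) (hfg r) (hgf r)).finrank_eq

end PersIso

namespace freeModFin

variable {m : ℕ} (L : Fin m → Pt n)

lemma hil_eq (r : Pt n) :
    Hil (k := k) (freeModFin L) r = countLe (List.ofFn L : Multiset (Pt n)) r := by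
  rw [Hil, countLe, ← Fin.univ_val_map, Multiset.filter_map, Multiset.card_map]
  exact (Module.finrank_fintype_fun_eq_card k).trans (Fintype.card_subtype _)

lemma map_apply {x y : Pt n} (h : x ≤ y) (v : (freeModFin (k := k) L).X x) (j : {i // L i ≤ y}) :
    (freeModFin L).map h v j = if hj : L j.1 ≤ x then v ⟨j.1, hj⟩ else 0 :=
  rfl

lemma persIso_comp_equiv {m' : ℕ} (σ : Fin m' ≃ Fin m) :
    PersIso (freeModFin (k := k) (L ∘ σ)) (freeModFin L) := by
  refine PersIso.of_linearEquiv
    (fun r => LinearEquiv.funCongrLeft k k (σ.subtypeEquiv fun i => Iff.rfl).symm)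
    fun {r s} h => LinearMap.ext fun v => funext fun i => ?_
  change (if h' : L i.1 ≤ r then v ⟨σ.symm i.1, by simpa using h'⟩ else 0)
    = (if h' : L (σ (σ.symm i.1)) ≤ r then v ⟨σ.symm i.1, h'⟩ else 0)
  simp only [Equiv.apply_symm_apply]

def basis (x : Pt n) : Module.Basis {i // L i ≤ x} k ((freeModFin (k := k) L).X x) :=
  Pi.basisFun k _

lemma basis_apply {x : Pt n} (i j : {i // L i ≤ x}) :
    basis (k := k) L x i j = if j = i then 1 else 0 := by
  change Pi.basisFun k {i // L i ≤ x} i j = _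
  rw [Pi.basisFun_apply, Pi.single_apply]

lemma map_basis {x y : Pt n} (h : x ≤ y) (i : {i // L i ≤ x}) :
    (freeModFin L).map h (basis (k := k) L x i) = basis L y ⟨i.1, i.2.trans h⟩ := by
  funext j
  rw [map_apply]
  split_ifs with hj
  · simp only [basis_apply, Subtype.ext_iff]
  · rw [basis_apply, if_neg (by rintro rfl; exact hj i.2)]

abbrev extendByZero (x : Pt n) : (freeModFin (k := k) L).X x →ₗ[k] (Fin m → k) :=
  Function.ExtendByZero.linearMap k Subtype.val

lemma extendByZero_injective (x : Pt n) : Function.Injective (extendByZero (k := k) L x) :=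
  Function.extend_injective Subtype.val_injective (0 : Fin m → k)

lemma extendByZero_apply {x : Pt n} (v : (freeModFin (k := k) L).X x) (j : Fin m) :
    extendByZero L x v j = if hj : L j ≤ x then v ⟨j, hj⟩ else 0 := by
  split_ifs with hj
  · exact Subtype.val_injective.extend_apply v 0 ⟨j, hj⟩
  · exact Function.extend_apply' _ _ _ fun ⟨j', hj'⟩ => hj (hj' ▸ j'.2)

lemma extendByZero_map {x y : Pt n} (h : x ≤ y) (v : (freeModFin (k := k) L).X x) :
    extendByZero L y ((freeModFin L).map h v) = extendByZero L x v := by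
  funext j
  rw [extendByZero_apply, extendByZero_apply]
  by_cases hjx : L j ≤ x
  · simp [map_apply, hjx, hjx.trans h]
  · by_cases hjy : L j ≤ y <;> simp [map_apply, hjx, hjy]

end freeModFin

namespace IsFreeWith

variable {P P' : PersMod k n} {B : Multiset (Pt n)}

lemma hil_eq (h : IsFreeWith P B) (r : Pt n) : Hil P r = countLe B r := by
  obtain ⟨m, L, rfl, hiso⟩ := h
  rw [hiso.hil_eq, freeModFin.hil_eq]

lemma persIso (h : IsFreeWith P B) (h' : IsFreeWith P' B) : PersIso P P' := by
  obtain ⟨m, L, hL, hiso⟩ := h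
  obtain ⟨m', L', hL', hiso'⟩ := h'
  obtain ⟨σ, rfl⟩ := exists_equiv_comp_eq_of_ofFn_eq (hL.symm.trans hL')
  exact hiso.trans ((freeModFin.persIso_comp_equiv L' σ).trans hiso'.symm)

end IsFreeWith

lemma exists_isFreeWith (B : Multiset (Pt n)) : ∃ P : PersMod k n, IsFreeWith P B :=
  ⟨freeModFin B.toList.get, _, _, by rw [List.ofFn_get, Multiset.coe_toList], PersIso.refl _⟩
lemma countLe_add (B C : Multiset (Pt n)) (r : Pt n) :
    countLe (B + C) r = countLe B r + countLe C r := by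
  rw [countLe, countLe, countLe, Multiset.filter_add, Multiset.card_add]

lemma countLe_lt_of_minimal {B C : Multiset (Pt n)} {x : Pt n} (hxB : x ∈ B) (hxC : x ∉ C)
    (hmin : ∀ y ∈ C, y ≤ x → x ≤ y) : countLe C x < countLe B x := by
  have hC : countLe C x = 0 := by
    refine Multiset.card_eq_zero.mpr (Multiset.filter_eq_nil.mpr fun y hy hyx => hxC ?_)
    rwa [le_antisymm hyx (hmin y hy hyx)] at hy
  rw [hC, countLe]
  exact Multiset.card_pos_iff_exists_mem.mpr ⟨x, Multiset.mem_filter.mpr ⟨hxB, le_rfl⟩⟩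

lemma eq_zero_of_countLe_eq_of_disjoint {B C : Multiset (Pt n)} (hBC : Disjoint B C)
    (h : countLe B = countLe C) : B + C = 0 := by
  by_contra hne
  obtain ⟨x, hx⟩ := (B + C).toFinset.exists_minimal (Multiset.toFinset_nonempty.mpr hne)
  have hmin : ∀ y ∈ B + C, y ≤ x → x ≤ y := fun y hy => hx.2 (Multiset.mem_toFinset.mpr hy)
  rcases Multiset.mem_add.mp (Multiset.mem_toFinset.mp hx.1) with hxB | hxC
  · exact (countLe_lt_of_minimal hxB (Multiset.disjoint_left.mp hBC hxB)
      fun y hy => hmin y (Multiset.mem_add.mpr (.inr hy))).ne (congrFun h x).symm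
  · exact (countLe_lt_of_minimal hxC (Multiset.disjoint_right.mp hBC hxC)
      fun y hy => hmin y (Multiset.mem_add.mpr (.inl hy))).ne (congrFun h x)

lemma countLe_sub_add_inter (B C : Multiset (Pt n)) (r : Pt n) :
    countLe B r = countLe (B - C) r + countLe (B ∩ C) r := by
  rw [← countLe_add, Multiset.sub_add_inter]

lemma countLe_injective : Function.Injective (countLe : Multiset (Pt n) → Pt n → ℕ) := by
  intro B C h
  have hsub : countLe (B - C) = countLe (C - B) := funext fun r => by
    have hB := countLe_sub_add_inter B C r
    have hC := countLe_sub_add_inter C B r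
    rw [Multiset.inter_comm, congrFun h r] at hB
    omega
  have h0 := eq_zero_of_countLe_eq_of_disjoint (Multiset.disjoint_sub_sub B C) hsub
  rw [add_eq_zero, tsub_eq_zero_iff_le, tsub_eq_zero_iff_le] at h0
  exact le_antisymm h0.1 h0.2

/-- Functions admitting a finite Hilbert decomposition: `Hil` of a free module with barcode `B`
is `countLe B`. -/
def hilbDecomposable (n : ℕ) : AddSubgroup (Pt n → ℤ) where
  carrier := {η | ∃ B C : Multiset (Pt n), ∀ r, η r = countLe B r - countLe C r}
  zero_mem' := ⟨0, 0, fun _ => rfl⟩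
  add_mem' := by
    rintro η η' ⟨B, C, hη⟩ ⟨B', C', hη'⟩
    refine ⟨B + B', C + C', fun r => ?_⟩
    simp only [Pi.add_apply, hη, hη', countLe_add]
    push_cast
    ring
  neg_mem' := by
    rintro η ⟨B, C, hη⟩
    exact ⟨C, B, fun r => by simp [hη]⟩

lemma countLe_mem_hilbDecomposable (B : Multiset (Pt n)) :
    (fun r => (countLe B r : ℤ)) ∈ hilbDecomposable n :=
  ⟨B, 0, fun _ => by simp [countLe]⟩

lemma upsetIndicator_mem_hilbDecomposable (p : Pt n) :
    (fun r => if p ≤ r then 1 else 0) ∈ hilbDecomposable n := by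
  convert countLe_mem_hilbDecomposable {p} using 2 with r
  by_cases hp : p ≤ r <;> simp [countLe, Multiset.filter_singleton, hp]

open Finset in
lemma mem_hilbDecomposable_of_comp_filter_le {ι : Type*} [Fintype ι] [DecidableEq ι]
    (L : ι → Pt n) (F : Finset ι → ℤ) (hF : F ∅ = 0) :
    (fun r => F {i | L i ≤ r}) ∈ hilbDecomposable n := by
  obtain ⟨μ, hμ⟩ := exists_sum_Iic_eq F
  have hμ0 : μ ∅ = 0 := by simpa [Iic_eq_powerset, hF] using hμ ∅
  let term (T : Finset ι) : Pt n → ℤ :=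
    if hT : T.Nonempty then μ T • fun r => if T.sup' hT L ≤ r then 1 else 0 else 0
  have hterm (T : Finset ι) : term T ∈ hilbDecomposable n := by
    unfold term
    split_ifs
    exacts [zsmul_mem (upsetIndicator_mem_hilbDecomposable _) _, zero_mem _]
  convert sum_mem fun T (_ : T ∈ univ) => hterm T using 1
  funext r
  have hpow (S : Finset ι) : S.powerset = ({T | T ⊆ S} : Finset (Finset ι)) := by ext; simp
  rw [← hμ, Iic_eq_powerset, hpow, sum_filter, Finset.sum_apply]
  refine sum_congr rfl fun T _ => ?_
  by_cases hT : T.Nonempty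
  · simp [term, hT, Finset.subset_iff]
  · simp [term, not_nonempty_iff_eq_empty.mp hT, hμ0]

namespace PersHom

variable {c d : ℕ} {Lc : Fin c → Pt n} {Ld : Fin d → Pt n}

/-- The `i`-th column of the matrix of `f`; it does not depend on the grade. -/
def column (f : PersHom (freeModFin (k := k) Lc) (freeModFin Ld)) (i : Fin c) : Fin d → k :=
  freeModFin.extendByZero Ld (Lc i) (f.app (Lc i) (freeModFin.basis Lc (Lc i) ⟨i, le_rfl⟩))

lemma extendByZero_app_basis (f : PersHom (freeModFin (k := k) Lc) (freeModFin Ld)) {x : Pt n}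
    (i : {i // Lc i ≤ x}) :
    freeModFin.extendByZero Ld x (f.app x (freeModFin.basis Lc x i)) = f.column i := by
  rw [column, ← freeModFin.map_basis Lc i.2 ⟨i.1, le_rfl⟩, ← LinearMap.comp_apply (f.app x),
    ← f.natural, LinearMap.comp_apply, freeModFin.extendByZero_map]

lemma finrank_range_app (f : PersHom (freeModFin (k := k) Lc) (freeModFin Ld)) (x : Pt n) :
    Module.finrank k (LinearMap.range (f.app x)) =
      Module.finrank k (Submodule.span k (f.column '' {i | Lc i ≤ x})) := by
  have hrange : Submodule.map (freeModFin.extendByZero Ld x) (LinearMap.range (f.app x)) =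
      Submodule.span k (f.column '' {i | Lc i ≤ x}) := by
    rw [LinearMap.range_eq_map, ← (freeModFin.basis Lc x).span_eq, Submodule.map_span,
      Submodule.map_span, ← Set.range_comp, ← Set.range_comp, Set.image_eq_range]
    exact congrArg _ (congrArg Set.range (funext f.extendByZero_app_basis))
  rw [← hrange,
    (Submodule.equivMapOfInjective _ (freeModFin.extendByZero_injective Ld x) _).finrank_eq]

end PersHom

lemma hil_eq_countLe_sub_finrank_range {M : PersMod k n} {c d : ℕ} {Lc : Fin c → Pt n}
    {Ld : Fin d → Pt n} (f : PersHom (freeModFin Lc) (freeModFin Ld))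
    (g : PersHom (freeModFin Ld) M) (hg : ∀ x, Function.Surjective (g.app x))
    (hfg : ∀ x, LinearMap.range (f.app x) = LinearMap.ker (g.app x)) (x : Pt n) :
    (Hil M x : ℤ) = countLe (List.ofFn Ld : Multiset (Pt n)) x
      - Module.finrank k (LinearMap.range (f.app x)) := by
  have hrank := LinearMap.finrank_range_add_finrank_ker (g.app x)
  rw [LinearMap.range_eq_top.mpr (hg x), finrank_top, ← hfg] at hrank
  rw [← freeModFin.hil_eq (k := k), Hil, Hil, ← hrank]
  push_cast
  ring

lemma FinitelyPresentable.hil_mem_hilbDecomposable {M : PersMod k n}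
    (hM : FinitelyPresentable M) : (fun r => (Hil M r : ℤ)) ∈ hilbDecomposable n := by
  obtain ⟨c, d, Lc, Ld, f, g, hg, hfg⟩ := hM
  have hrank : (fun r => (Module.finrank k (LinearMap.range (f.app r)) : ℤ)) ∈
      hilbDecomposable n := by
    convert mem_hilbDecomposable_of_comp_filter_le Lc
      (fun T => (Module.finrank k (Submodule.span k (f.column '' T)) : ℤ)) (by simp) using 2 with r
    have hS : (({i | Lc i ≤ r} : Finset (Fin c)) : Set (Fin c)) = {i | Lc i ≤ r} := by
      ext; simp
    rw [f.finrank_range_app, hS]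
  convert sub_mem (countLe_mem_hilbDecomposable (List.ofFn Ld)) hrank using 1
  exact funext (hil_eq_countLe_sub_finrank_range f g hg hfg)

lemma exists_isMinHilbDecomp {η : Pt n → ℤ} (hη : η ∈ hilbDecomposable n) :
    ∃ (P Q : PersMod k n) (BP BQ : Multiset (Pt n)), IsMinHilbDecomp η P Q BP BQ := by
  obtain ⟨B, C, hη⟩ := hη
  obtain ⟨P, hP⟩ := exists_isFreeWith (k := k) (B - C)
  obtain ⟨Q, hQ⟩ := exists_isFreeWith (k := k) (C - B)
  refine ⟨P, Q, _, _, hP, hQ, fun r => ?_,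
    fun x hx => Multiset.disjoint_left.mp (Multiset.disjoint_sub_sub B C) hx.1 hx.2⟩
  have hB := countLe_sub_add_inter B C r
  have hC := countLe_sub_add_inter C B r
  rw [Multiset.inter_comm] at hC
  rw [hη, hP.hil_eq, hQ.hil_eq]
  omega

namespace IsMinHilbDecomp

variable {η : Pt n → ℤ} {P Q P' Q' : PersMod k n} {BP BQ BP' BQ' : Multiset (Pt n)}

lemma disjoint (h : IsMinHilbDecomp η P Q BP BQ) : Disjoint BP BQ :=
  Multiset.disjoint_left.mpr fun hP hQ => h.2.2.2 _ ⟨hP, hQ⟩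

lemma barcodes_eq (h : IsMinHilbDecomp η P Q BP BQ) (h' : IsMinHilbDecomp η P' Q' BP' BQ') :
    BP = BP' ∧ BQ = BQ' := by
  refine Multiset.eq_and_eq_of_add_eq_add_of_disjoint h.disjoint h'.disjoint
    (countLe_injective (funext fun r => ?_))
  obtain ⟨hP, hQ, hη, -⟩ := h
  obtain ⟨hP', hQ', hη', -⟩ := h'
  have e := (hη r).symm.trans (hη' r)
  rw [hP.hil_eq, hQ.hil_eq, hP'.hil_eq, hQ'.hil_eq] at e
  rw [countLe_add, countLe_add]
  omega

lemma persIso (h : IsMinHilbDecomp η P Q BP BQ) (h' : IsMinHilbDecomp η P' Q' BP' BQ') :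
    PersIso P P' ∧ PersIso Q Q' := by
  obtain ⟨rfl, rfl⟩ := h.barcodes_eq h'
  exact ⟨h.1.persIso h'.1, h.2.1.persIso h'.2.1⟩

end IsMinHilbDecomp

/-- **Proposition 5.2** (existence and uniqueness of minimal Hilbert decompositions).
Every finitely presentable `M` admits a minimal Hilbert decomposition of its Hilbert
function, and any two minimal Hilbert decompositions are isomorphic. -/
theorem minimal_hilbert_decomposition_exists_unique
    {k : Type} [Field k] {n : ℕ}
    (M : PersMod k n) (hM : FinitelyPresentable M) :
    (∃ (P Q : PersMod k n) (BP BQ : Multiset (Pt n)),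
        IsMinHilbDecomp (fun r => (Hil M r : ℤ)) P Q BP BQ) ∧
    (∀ (P Q : PersMod k n) (BP BQ : Multiset (Pt n))
        (P' Q' : PersMod k n) (BP' BQ' : Multiset (Pt n)),
        IsMinHilbDecomp (fun r => (Hil M r : ℤ)) P Q BP BQ →
        IsMinHilbDecomp (fun r => (Hil M r : ℤ)) P' Q' BP' BQ' →
        PersIso P P' ∧ PersIso Q Q') :=
  ⟨exists_isMinHilbDecomp hM.hil_mem_hilbDecomposable,
    fun _ _ _ _ _ _ _ _ h h' => h.persIso h'⟩

end
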